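/- With I a proper two-sided ideal of a ℤ-graded ring R, the image t̄ of t in B = R[t]/⟨I*⟩ is not a zero divisor in B; consequently the ideal ⟨1 − t̄⟩ contains no nonzero homogeneous element of B. -/

import Mathlib

/-!
A polynomial `F` that is homogeneous for the mixed gradation, with `t`-adic order `m`, satisfies
`F = t ^ m * (F(1))*`; hence it lies in `⟨I*⟩` exactly when its dehomogenization `F(1)` lies in `I`.
Since the mixed components of a product of `a t ^ j` with `F` are `a t ^ j` times shifted components
of `F`, the polynomials whose components all dehomogenize into `I` form a two-sided ideal, and it
equals `⟨I*⟩`. Multiplication by the central `t` only shifts components and does not change their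
dehomogenizations, so `t̄` is regular. Finally `t ↦ 1` induces `B → R ⧸ I`, which kills `1 - t̄`:
a homogeneous element of `⟨1 - t̄⟩` lifts to a homogeneous `F` with `F(1) ∈ I`, so `F ∈ ⟨I*⟩`.
-/

open DirectSum Polynomial
open scoped Classical

variable {R : Type*} [Ring R]

/-- The top degree of `f` (junk value `0` for `f = 0`). -/
noncomputable def deg (A : ℤ → AddSubgroup R) [GradedRing A] (f : R) : ℤ :=
  ((DirectSum.decompose A f).support.max).unbotD 0

/-- The leading homogeneous part `LH f` of `f`. -/
noncomputable def LH (A : ℤ → AddSubgroup R) [GradedRing A] (f : R) : R :=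
  (DirectSum.decompose A f (deg A f) : R)

/-- The homogenization `f*` of `f` with respect to the central degree-one variable `t = X`. -/
noncomputable def homog (A : ℤ → AddSubgroup R) [GradedRing A] (f : R) : Polynomial R :=
  ∑ i ∈ (DirectSum.decompose A f).support,
    Polynomial.C (DirectSum.decompose A f i : R) * Polynomial.X ^ (deg A f - i).toNat

/-- Dehomogenization `F ↦ F_*`, i.e. evaluation of `t = X` at `1`. -/
noncomputable def dehom : Polynomial R →+* R :=
  Polynomial.eval₂RingHom' (RingHom.id R) 1 (fun a => Commute.one_right a)

/-- The degree-`p` component of the mixed gradation on `R[t]`, spanned by the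
elements `a * t^j` with `a ∈ A i` and `i + j = p`. -/
noncomputable def mixed (A : ℤ → AddSubgroup R) (p : ℤ) : AddSubgroup (Polynomial R) :=
  AddSubgroup.closure
    { F | ∃ (i : ℤ) (j : ℕ) (a : R), a ∈ A i ∧ i + (j : ℤ) = p ∧
        F = Polynomial.C a * Polynomial.X ^ j }

section MixedComponent

variable (A : ℤ → AddSubgroup R)

lemma C_mul_X_pow_mem_mixed {a : R} {i : ℤ} (ha : a ∈ A i) (j : ℕ) :
    C a * X ^ j ∈ mixed A (i + j) :=
  AddSubgroup.subset_closure ⟨i, j, a, ha, rfl, rfl⟩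

lemma mem_mixed_iff {p : ℤ} {F : R[X]} : F ∈ mixed A p ↔ ∀ k : ℕ, F.coeff k ∈ A (p - k) := by
  constructor
  · intro hF
    induction hF using AddSubgroup.closure_induction with
    | mem _ h =>
      obtain ⟨i, j, a, ha, rfl, rfl⟩ := h
      intro k
      rw [coeff_C_mul_X_pow]
      split_ifs with hkj
      · subst hkj; simpa using ha
      · exact zero_mem _
    | zero => simp [zero_mem]
    | add _ _ _ _ hF hG => exact fun k => by simpa using add_mem (hF k) (hG k)
    | neg _ _ hF => exact fun k => by simpa using neg_mem (hF k)
  · intro hF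
    rw [as_sum_support_C_mul_X_pow F]
    exact sum_mem fun j _ => by simpa using C_mul_X_pow_mem_mixed A (hF j) j

variable [GradedRing A]

noncomputable def mixedComponent (p : ℤ) : R[X] →+ R[X] where
  toFun F := F.sum fun j a => monomial j (decompose A a (p - j) : R)
  map_zero' := sum_zero_index _
  map_add' F G := sum_add_index _ _ _ (fun _ => by simp) fun _ _ _ => by simp

lemma coeff_mixedComponent (p : ℤ) (F : R[X]) (k : ℕ) :
    (mixedComponent A p F).coeff k = (decompose A (F.coeff k) (p - k) : R) := by
  change (F.sum fun j a => monomial j (decompose A a (p - j) : R)).coeff k = _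
  rw [coeff_sum, sum_def]
  simp only [coeff_monomial]
  rw [Finset.sum_ite_eq', ite_eq_left_iff, notMem_support_iff]
  intro h
  simp [h]

lemma mixedComponent_mem_mixed (p : ℤ) (F : R[X]) : mixedComponent A p F ∈ mixed A p :=
  (mem_mixed_iff A).2 fun k => by rw [coeff_mixedComponent]; exact SetLike.coe_mem _

lemma mixedComponent_of_mem_mixed {p q : ℤ} {F : R[X]} (hF : F ∈ mixed A q) :
    mixedComponent A p F = if p = q then F else 0 := by
  rw [mem_mixed_iff] at hF
  ext k
  rw [coeff_mixedComponent]
  split_ifs with h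
  · subst h; exact decompose_of_mem_same A (hF k)
  · exact decompose_of_mem_ne A (hF k) (by omega)

theorem induction_on_homogeneous_monomial {P : R[X] → Prop} (F : R[X])
    (add : ∀ F G, P F → P G → P (F + G))
    (monomial : ∀ {i : ℤ} {a : R} (j : ℕ), a ∈ A i → P (C a * X ^ j)) : P F := by
  induction F using Polynomial.induction_on' with
  | add F G hF hG => exact add F G hF hG
  | monomial j b =>
    rw [← C_mul_X_pow_eq_monomial, ← sum_support_decompose A b, map_sum, Finset.sum_mul]
    exact Finset.sum_induction _ P add (by simpa using monomial (i := 0) 0 (zero_mem (A 0)))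
      fun i _ => monomial j (SetLike.coe_mem _)

lemma exists_finset_sum_mixedComponent (F : R[X]) :
    ∃ s : Finset ℤ, ∑ p ∈ s, mixedComponent A p F = F := by
  suffices ∃ s : Finset ℤ, ∀ t, s ⊆ t → ∑ p ∈ t, mixedComponent A p F = F from
    this.imp fun s hs => hs s subset_rfl
  induction F using induction_on_homogeneous_monomial A with
  | add F G hF hG =>
    obtain ⟨s, hs⟩ := hF
    obtain ⟨s', hs'⟩ := hG
    refine ⟨s ∪ s', fun t ht => ?_⟩
    rw [Finset.union_subset_iff] at ht
    simp only [map_add, Finset.sum_add_distrib, hs t ht.1, hs' t ht.2]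
  | @monomial i a j ha =>
    refine ⟨{i + j}, fun t ht => ?_⟩
    simp only [mixedComponent_of_mem_mixed A (C_mul_X_pow_mem_mixed A ha j)]
    rw [Finset.sum_ite_eq', if_pos (Finset.singleton_subset_iff.1 ht)]

lemma mixedComponent_C_mul_X_pow_mul {a : R} {i : ℤ} (ha : a ∈ A i) (j : ℕ) (p : ℤ) (F : R[X]) :
    mixedComponent A p (C a * X ^ j * F) = C a * X ^ j * mixedComponent A (p - i - j) F := by
  ext k
  simp only [mul_assoc, coeff_C_mul, coeff_X_pow_mul', coeff_mixedComponent]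
  split_ifs with hjk
  · rw [show p - k = i + (p - i - j - (k - j : ℕ)) by omega,
      coe_decompose_mul_add_of_left_mem A ha]
  · simp

lemma mixedComponent_mul_C_mul_X_pow {a : R} {i : ℤ} (ha : a ∈ A i) (j : ℕ) (p : ℤ) (F : R[X]) :
    mixedComponent A p (F * (C a * X ^ j)) = mixedComponent A (p - i - j) F * (C a * X ^ j) := by
  ext k
  simp only [← mul_assoc, coeff_mul_C, coeff_mul_X_pow', coeff_mixedComponent]
  split_ifs with hjk
  · rw [show p - k = (p - i - j - (k - j : ℕ)) + i by omega,
      coe_decompose_mul_add_of_right_mem A ha]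
  · simp

lemma mixedComponent_X_mul (p : ℤ) (F : R[X]) :
    mixedComponent A (p + 1) (X * F) = X * mixedComponent A p F := by
  simpa using mixedComponent_C_mul_X_pow_mul A (SetLike.one_mem_graded A) 1 (p + 1) F

end MixedComponent

section Dehomogenization

lemma dehom_apply (F : R[X]) : dehom F = F.eval 1 := rfl

@[simp]
lemma dehom_C_mul_X_pow (a : R) (j : ℕ) : dehom (C a * X ^ j) = a := by
  simp [dehom_apply]

@[simp]
lemma dehom_X : dehom (X : R[X]) = 1 := by
  simp [dehom_apply]

variable (A : ℤ → AddSubgroup R) [GradedRing A]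

lemma dehom_homog (f : R) : dehom (homog A f) = f := by
  simp only [homog, map_sum, dehom_C_mul_X_pow]
  exact sum_support_decompose A f

lemma le_deg {f : R} {i : ℤ} (hi : i ∈ (decompose A f).support) : i ≤ deg A f := by
  have hne : (decompose A f).support.Nonempty := ⟨i, hi⟩
  rw [deg, ← Finset.coe_max' hne, WithBot.unbotD_coe]
  exact Finset.le_max' _ _ hi

lemma deg_eq_of_forall_lt {f : R} {d : ℤ} (hd : decompose A f d ≠ 0)
    (hlt : ∀ i, d < i → decompose A f i = 0) : deg A f = d := by
  have hmax : (decompose A f).support.max = d := by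
    refine le_antisymm (Finset.max_le fun i hi => ?_) (Finset.le_max (by simpa using hd))
    by_contra! h
    exact DFinsupp.mem_support_iff.1 hi (hlt i (WithBot.coe_lt_coe.1 h))
  rw [deg, hmax, WithBot.unbotD_coe]

lemma coeff_homog (f : R) (n : ℕ) :
    (homog A f).coeff n = (decompose A f (deg A f - n) : R) := by
  simp only [homog, finsetSum_coeff, coeff_C_mul_X_pow]
  rw [Finset.sum_congr rfl fun i hi => if_congr
    (show n = (deg A f - i).toNat ↔ deg A f - n = i by have := le_deg A hi; omega) rfl rfl,
    Finset.sum_ite_eq]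
  split_ifs with h
  · rfl
  · rw [DFinsupp.notMem_support_iff.1 h, ZeroMemClass.coe_zero]

lemma homog_mem_mixed (f : R) : homog A f ∈ mixed A (deg A f) :=
  sum_mem fun i hi => by
    have h := C_mul_X_pow_mem_mixed A (SetLike.coe_mem (decompose A f i)) (deg A f - i).toNat
    rwa [show i + ((deg A f - i).toNat : ℤ) = deg A f by have := le_deg A hi; omega] at h

lemma coe_decompose_dehom_of_mem_mixed {p : ℤ} {F : R[X]} (hF : F ∈ mixed A p) (i : ℤ) :
    (decompose A (dehom F) i : R) = if i ≤ p then F.coeff (p - i).toNat else 0 := by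
  induction hF using AddSubgroup.closure_induction with
  | mem _ h =>
    obtain ⟨i', j, a, ha, rfl, rfl⟩ := h
    rw [dehom_C_mul_X_pow, coeff_C_mul_X_pow]
    by_cases hi : i = i'
    · subst hi; simp [decompose_of_mem_same A ha]
    · rw [decompose_of_mem_ne A ha (Ne.symm hi)]
      split_ifs <;> first | rfl | omega
  | zero => simp
  | add _ _ _ _ hF hG =>
    rw [map_add, decompose_add, DirectSum.add_apply, AddSubgroup.coe_add, hF, hG]
    split_ifs <;> simp
  | neg _ _ hF =>
    rw [map_neg, decompose_neg, DFinsupp.neg_apply, AddSubgroup.coe_neg, hF]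
    split_ifs <;> simp

lemma deg_dehom_of_mem_mixed {p : ℤ} {F : R[X]} (hF : F ∈ mixed A p) (h0 : F ≠ 0) :
    deg A (dehom F) = p - F.natTrailingDegree := by
  apply deg_eq_of_forall_lt
  · rw [Ne, ← Subtype.coe_inj, coe_decompose_dehom_of_mem_mixed A hF, if_pos (by omega)]
    simpa using trailingCoeff_nonzero_iff_nonzero.2 h0
  · intro i hi
    rw [← Subtype.coe_inj, coe_decompose_dehom_of_mem_mixed A hF]
    split_ifs
    · exact coeff_eq_zero_of_lt_natTrailingDegree (by omega)
    · rfl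

lemma eq_X_pow_mul_homog_dehom {p : ℤ} {F : R[X]} (hF : F ∈ mixed A p) :
    F = X ^ F.natTrailingDegree * homog A (dehom F) := by
  rcases eq_or_ne F 0 with rfl | h0
  · simp [homog]
  ext k
  rw [coeff_X_pow_mul', coeff_homog, deg_dehom_of_mem_mixed A hF h0]
  split_ifs with hk
  · rw [coe_decompose_dehom_of_mem_mixed A hF, if_pos (by omega)]
    congr 1
    omega
  · exact coeff_eq_zero_of_lt_natTrailingDegree (by omega)

end Dehomogenization

section HomogenizedIdeal

variable (A : ℤ → AddSubgroup R) [GradedRing A] (I : TwoSidedIdeal R)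

lemma dehom_mem_of_mem_span_homog {F : R[X]} (hF : F ∈ TwoSidedIdeal.span (homog A '' I)) :
    dehom F ∈ I := by
  refine (TwoSidedIdeal.mem_comap dehom).1 (TwoSidedIdeal.span_le.2 ?_ hF)
  rintro _ ⟨f, hf, rfl⟩
  rwa [SetLike.mem_coe, TwoSidedIdeal.mem_comap, dehom_homog]

lemma mem_span_homog_of_mem_mixed {p : ℤ} {F : R[X]} (hF : F ∈ mixed A p) (hd : dehom F ∈ I) :
    F ∈ TwoSidedIdeal.span (homog A '' I) := by
  rw [eq_X_pow_mul_homog_dehom A hF]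
  exact TwoSidedIdeal.mul_mem_left _ _ _ (TwoSidedIdeal.subset_span ⟨_, hd, rfl⟩)

lemma dehom_mixedComponent_mul_mem {F : R[X]} (hF : ∀ q, dehom (mixedComponent A q F) ∈ I)
    (G : R[X]) (p : ℤ) :
    dehom (mixedComponent A p (G * F)) ∈ I ∧ dehom (mixedComponent A p (F * G)) ∈ I := by
  induction G using induction_on_homogeneous_monomial A generalizing p with
  | add G G' hG hG' =>
    simp only [add_mul, mul_add, map_add]
    exact ⟨add_mem (hG p).1 (hG' p).1, add_mem (hG p).2 (hG' p).2⟩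
  | monomial j ha =>
    rw [mixedComponent_C_mul_X_pow_mul A ha, mixedComponent_mul_C_mul_X_pow A ha,
      map_mul dehom (C _ * X ^ _), map_mul dehom _ (C _ * X ^ _), dehom_C_mul_X_pow]
    exact ⟨TwoSidedIdeal.mul_mem_left _ _ _ (hF _), TwoSidedIdeal.mul_mem_right _ _ _ (hF _)⟩

noncomputable def dehomComponentIdeal : TwoSidedIdeal R[X] :=
  TwoSidedIdeal.mk' {F | ∀ q, dehom (mixedComponent A q F) ∈ I}
    (fun q => by simp)
    (fun hF hG q => by simpa using add_mem (hF q) (hG q))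
    (fun hF q => by simpa using neg_mem (hF q))
    (fun hG q => (dehom_mixedComponent_mul_mem A I hG _ q).1)
    (fun hF q => (dehom_mixedComponent_mul_mem A I hF _ q).2)

lemma mem_dehomComponentIdeal {F : R[X]} :
    F ∈ dehomComponentIdeal A I ↔ ∀ q, dehom (mixedComponent A q F) ∈ I :=
  TwoSidedIdeal.mem_mk' ..

theorem span_homog_eq_dehomComponentIdeal :
    TwoSidedIdeal.span (homog A '' I) = dehomComponentIdeal A I := by
  apply le_antisymm
  · rw [TwoSidedIdeal.span_le]
    rintro _ ⟨f, hf, rfl⟩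
    rw [SetLike.mem_coe, mem_dehomComponentIdeal]
    intro q
    rw [mixedComponent_of_mem_mixed A (homog_mem_mixed A f)]
    split_ifs
    · rwa [dehom_homog]
    · simp
  · intro F hF
    rw [mem_dehomComponentIdeal] at hF
    obtain ⟨s, hs⟩ := exists_finset_sum_mixedComponent A F
    rw [← hs]
    exact sum_mem fun q _ => mem_span_homog_of_mem_mixed A I (mixedComponent_mem_mixed A q F) (hF q)

lemma mem_span_homog_of_X_mul_mem {F : R[X]} (h : X * F ∈ TwoSidedIdeal.span (homog A '' I)) :
    F ∈ TwoSidedIdeal.span (homog A '' I) := by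
  rw [span_homog_eq_dehomComponentIdeal, mem_dehomComponentIdeal] at h ⊢
  intro q
  simpa [mixedComponent_X_mul] using h (q + 1)

end HomogenizedIdeal

lemma ringCon_mk'_eq_zero_iff {S : Type*} [Ring S] (J : TwoSidedIdeal S) (x : S) :
    J.ringCon.mk' x = 0 ↔ x ∈ J := by
  rw [← TwoSidedIdeal.mem_ker, TwoSidedIdeal.ker_ringCon_mk']

section Quotient

variable (A : ℤ → AddSubgroup R) [GradedRing A] (I : TwoSidedIdeal R)

noncomputable def dehomQuotient :
    (TwoSidedIdeal.span (homog A '' I)).ringCon.Quotient →+* I.ringCon.Quotient :=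
  RingCon.lift _ (I.ringCon.mk'.comp dehom) fun F G h => by
    rw [RingCon.ker_apply, RingHom.comp_apply, RingHom.comp_apply, ← sub_eq_zero, ← map_sub,
      ← map_sub, ringCon_mk'_eq_zero_iff]
    exact dehom_mem_of_mem_span_homog A I ((TwoSidedIdeal.rel_iff _ _ _).1 h)

lemma dehomQuotient_mk' (F : R[X]) :
    dehomQuotient A I ((TwoSidedIdeal.span (homog A '' I)).ringCon.mk' F)
      = I.ringCon.mk' (dehom F) :=
  RingCon.lift_mk' ..

lemma mk'_eq_zero_of_mem_span_one_sub_X {p : ℤ} {F : R[X]} (hF : F ∈ mixed A p)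
    (h : (TwoSidedIdeal.span (homog A '' I)).ringCon.mk' F ∈
      TwoSidedIdeal.span {1 - (TwoSidedIdeal.span (homog A '' I)).ringCon.mk' X}) :
    (TwoSidedIdeal.span (homog A '' I)).ringCon.mk' F = 0 := by
  have hker : TwoSidedIdeal.span {1 - (TwoSidedIdeal.span (homog A '' I)).ringCon.mk' X}
      ≤ TwoSidedIdeal.ker (dehomQuotient A I) := by
    rw [TwoSidedIdeal.span_le, Set.singleton_subset_iff, SetLike.mem_coe,
      TwoSidedIdeal.mem_ker, map_sub, map_one, dehomQuotient_mk', dehom_X, map_one, sub_self]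
  have hdF : dehom F ∈ I := by
    rw [← ringCon_mk'_eq_zero_iff, ← dehomQuotient_mk' A]
    exact (TwoSidedIdeal.mem_ker _).1 (hker h)
  rw [ringCon_mk'_eq_zero_iff]
  exact mem_span_homog_of_mem_mixed A I hF hdF

end Quotient

theorem stmt8_general (A : ℤ → AddSubgroup R) [GradedRing A] (I : TwoSidedIdeal R) :
    (∀ b : (TwoSidedIdeal.span (homog A '' (I : Set R))).ringCon.Quotient,
      (TwoSidedIdeal.span (homog A '' (I : Set R))).ringCon.mk' Polynomial.X * b = 0 → b = 0) ∧
    (∀ b : (TwoSidedIdeal.span (homog A '' (I : Set R))).ringCon.Quotient,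
      b * (TwoSidedIdeal.span (homog A '' (I : Set R))).ringCon.mk' Polynomial.X = 0 → b = 0) ∧
    (∀ (p : ℤ) (b : (TwoSidedIdeal.span (homog A '' (I : Set R))).ringCon.Quotient),
      b ∈ AddSubgroup.map
        ((TwoSidedIdeal.span (homog A '' (I : Set R))).ringCon.mk' :
          Polynomial R →+* _).toAddMonoidHom (mixed A p) →
      b ∈ TwoSidedIdeal.span
        {1 - (TwoSidedIdeal.span (homog A '' (I : Set R))).ringCon.mk' Polynomial.X} →
      b = 0) := by
  set J := TwoSidedIdeal.span (homog A '' (I : Set R))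
  have hX : ∀ b : J.ringCon.Quotient, J.ringCon.mk' X * b = 0 → b = 0 := by
    intro b hb
    obtain ⟨F, rfl⟩ := J.ringCon.mk'_surjective b
    rw [← map_mul, ringCon_mk'_eq_zero_iff] at hb
    rw [ringCon_mk'_eq_zero_iff]
    exact mem_span_homog_of_X_mul_mem A I hb
  refine ⟨hX, fun b hb => hX b ?_, ?_⟩
  · obtain ⟨F, rfl⟩ := J.ringCon.mk'_surjective b
    rwa [← map_mul, (commute_X F).eq, map_mul]
  · rintro p _ ⟨F, hF, rfl⟩ h
    exact mk'_eq_zero_of_mem_span_one_sub_X A I hF h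

/-- For a proper two-sided ideal `I` of `R`, the image `t̄` of `t` in
`B = R[t]/⟨I*⟩` is not a zero divisor, and consequently the ideal `⟨1 - t̄⟩` of `B`
contains no nonzero homogeneous element (for the quotient of the mixed gradation). -/
theorem stmt8 (A : ℤ → AddSubgroup R) [GradedRing A] (I : TwoSidedIdeal R) (hI : I ≠ ⊤) :
    (∀ b : (TwoSidedIdeal.span (homog A '' (I : Set R))).ringCon.Quotient,
      (TwoSidedIdeal.span (homog A '' (I : Set R))).ringCon.mk' Polynomial.X * b = 0 → b = 0) ∧
    (∀ b : (TwoSidedIdeal.span (homog A '' (I : Set R))).ringCon.Quotient,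
      b * (TwoSidedIdeal.span (homog A '' (I : Set R))).ringCon.mk' Polynomial.X = 0 → b = 0) ∧
    (∀ (p : ℤ) (b : (TwoSidedIdeal.span (homog A '' (I : Set R))).ringCon.Quotient),
      b ∈ AddSubgroup.map
        ((TwoSidedIdeal.span (homog A '' (I : Set R))).ringCon.mk' :
          Polynomial R →+* _).toAddMonoidHom (mixed A p) →
      b ∈ TwoSidedIdeal.span
        {1 - (TwoSidedIdeal.span (homog A '' (I : Set R))).ringCon.mk' Polynomial.X} →
      b = 0) :=
  stmt8_general A I
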